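/- Let P be a two-user q-ary input multiple-access channel (q prime). Then for each α ∈ {1, 2, 12}: I⁽α⁾(P⁻) ≤ I⁽α⁾(P) ≤ I⁽α⁾(P⁺). In particular 𝕀(P⁻) ⊆ 𝕀(P) ⊆ 𝕀(P⁺). -/

import Mathlib

open Finset

namespace PolarMAC

/-- A two-user `q`-ary input multiple-access channel: an arbitrary finite output
alphabet `Y` together with transition probabilities `P x w y = P(y | x, w)`. -/
structure MAC (q : ℕ) where
  Y : Type
  [fintypeY : Fintype Y]
  P : ZMod q → ZMod q → Y → ℝ

attribute [instance] MAC.fintypeY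

/-- `M` is a genuine MAC: entries nonnegative and rows summing to one. -/
def IsMAC {q : ℕ} [Fact (Nat.Prime q)] (M : MAC q) : Prop :=
  (∀ x w y, 0 ≤ M.P x w y) ∧ ∀ x w, ∑ y, M.P x w y = 1

/-- Entropy (base `q`) of a pmf on a finite type. -/
noncomputable def Hq (q : ℕ) {α : Type*} [Fintype α] (p : α → ℝ) : ℝ :=
  ∑ a, -(p a * Real.logb q (p a))

/-- Mutual information (base `q`) between the two coordinates of a joint pmf. -/
noncomputable def MIq (q : ℕ) {α β : Type*} [Fintype α] [Fintype β] (p : α → β → ℝ) : ℝ :=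
  Hq q (fun a => ∑ b, p a b) + Hq q (fun b => ∑ a, p a b) - Hq q (fun ab : α × β => p ab.1 ab.2)

variable (q : ℕ) [Fact (Nat.Prime q)]

/-- `I⁽¹⁾(P) = I(X; Y W)` for independent uniform inputs. -/
noncomputable def I1 (M : MAC q) : ℝ :=
  MIq q (fun (x : ZMod q) (wy : ZMod q × M.Y) => M.P x wy.1 wy.2 / (q : ℝ) ^ 2)

/-- `I⁽²⁾(P) = I(W; Y X)` for independent uniform inputs. -/
noncomputable def I2 (M : MAC q) : ℝ :=
  MIq q (fun (w : ZMod q) (xy : ZMod q × M.Y) => M.P xy.1 w xy.2 / (q : ℝ) ^ 2)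

/-- `I⁽¹²⁾(P) = I(X W; Y)` for independent uniform inputs. -/
noncomputable def I12 (M : MAC q) : ℝ :=
  MIq q (fun (xw : ZMod q × ZMod q) (y : M.Y) => M.P xw.1 xw.2 y / (q : ℝ) ^ 2)

/-- `K(P) = (I⁽¹⁾(P), I⁽²⁾(P), I⁽¹²⁾(P)) ∈ ℝ³`, with the Euclidean norm. -/
noncomputable def Kvec (M : MAC q) : EuclideanSpace ℝ (Fin 3) :=
  WithLp.toLp 2 ![I1 q M, I2 q M, I12 q M]

/-- The transform `P⁻(y₁,y₂ | u₁,v₁) = q⁻² ∑_{u₂,v₂} P(y₁|u₁+u₂, v₁+v₂) P(y₂|u₂,v₂)`. -/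
noncomputable def minusT (M : MAC q) : MAC q where
  Y := M.Y × M.Y
  P := fun u₁ v₁ y =>
    ((q : ℝ) ^ 2)⁻¹ * ∑ u₂, ∑ v₂, M.P (u₁ + u₂) (v₁ + v₂) y.1 * M.P u₂ v₂ y.2

/-- The transform `P⁺(y₁,y₂,u₁,v₁ | u₂,v₂) = q⁻² P(y₁|u₁+u₂, v₁+v₂) P(y₂|u₂,v₂)`,
with output `((y₁, y₂), (u₁, v₁))`. -/
noncomputable def plusT (M : MAC q) : MAC q where
  Y := (M.Y × M.Y) × ZMod q × ZMod q
  P := fun u₂ v₂ z =>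
    ((q : ℝ) ^ 2)⁻¹ * (M.P (z.2.1 + u₂) (z.2.2 + v₂) z.1.1 * M.P u₂ v₂ z.1.2)


/-- The uniform-input rate region
`𝕀(P) = {(R₁,R₂) : 0 ≤ R₁ ≤ I⁽¹⁾(P), 0 ≤ R₂ ≤ I⁽²⁾(P), R₁+R₂ ≤ I⁽¹²⁾(P)}`. -/
noncomputable def rateRegion (M : MAC q) : Set (ℝ × ℝ) :=
  {r : ℝ × ℝ | 0 ≤ r.1 ∧ r.1 ≤ I1 q M ∧ 0 ≤ r.2 ∧ r.2 ≤ I2 q M ∧ r.1 + r.2 ≤ I12 q M}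


/-!
Each `I⁽ᵅ⁾` is the symmetric capacity (mutual information under uniform input) of a single-user
channel over a finite abelian group `G`: `I⁽¹²⁾` that of `(X, W) ↦ Y` over `G = F_q²`, `I⁽¹⁾`
that of `X ↦ (W, Y)` over `G = F_q`, the uniform input `W` of the other user acting as side
information, and `I⁽²⁾` is `I⁽¹⁾` of the MAC with the users swapped.

For a single-user channel `C`, data processing gives `I(C⁺) = I(U₂; Y₁ Y₂ U₁) ≥ I(U₂; Y₂) = I(C)`
and `I(C⁻) = I(U₁; Y₁ Y₂) ≤ I(U₁; Y₁ Y₂ U₂) = I(U₁ + U₂; Y₁ Y₂ U₂) = I(U₁ + U₂; Y₁) = I(C)`,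
the last step because `(Y₂, U₂)` is independent of `(U₁ + U₂, Y₁)`. Data processing is strong
subadditivity of entropy, a consequence of Gibbs' inequality. For `I⁽¹²⁾` the MAC transforms are
exactly `C⁻` and `C⁺`; for `I⁽¹⁾`, `P⁺` is `C⁺` up to relabelling outputs, while `P⁻` only sees
the coarser output `V₁ = W₁ - W₂` of `C⁻`, which costs one more data-processing step.
-/

section Entropy

open Real

variable {α β γ δ : Type*} [Fintype α] [Fintype β] [Fintype γ] [Fintype δ]

theorem Hq_eq_sum_negMulLog (q : ℕ) (p : α → ℝ) :
    Hq q p = (∑ a, negMulLog (p a)) / log q := by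
  simp only [Hq, negMulLog, logb, Finset.sum_div]
  exact Finset.sum_congr rfl fun a _ => by ring

theorem Hq_comp_equiv (q : ℕ) (p : α → ℝ) (e : β ≃ α) : Hq q (p ∘ e) = Hq q p :=
  e.sum_comp fun a => -(p a * logb q (p a))

theorem Hq_mul (q : ℕ) (p : α → ℝ) (r : β → ℝ) :
    Hq q (fun x : α × β => p x.1 * r x.2) = (∑ b, r b) * Hq q p + (∑ a, p a) * Hq q r := by
  simp only [Hq_eq_sum_negMulLog, negMulLog_mul, Fintype.sum_prod_type,
    Finset.sum_add_distrib, ← Finset.mul_sum, ← Finset.sum_mul]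
  ring

theorem MIq_comp_equiv_right (q : ℕ) (p : α → β → ℝ) (e : γ ≃ β) :
    MIq q (fun a c => p a (e c)) = MIq q p := by
  have hrow : (fun a => ∑ c, p a (e c)) = fun a => ∑ b, p a b :=
    funext fun a => e.sum_comp (p a)
  rw [MIq, MIq, hrow]
  congr 1
  · congr 1
    exact Hq_comp_equiv q (fun b => ∑ a, p a b) e
  · exact Hq_comp_equiv q (fun ab : α × β => p ab.1 ab.2) ((Equiv.refl α).prodCongr e)

theorem MIq_shift [AddGroup α] (q : ℕ) (p : α → β → ℝ) (τ : β → α)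
    (h : ∀ a, ∑ b, p (a + τ b) b = ∑ b, p a b) :
    MIq q (fun a b => p (a + τ b) b) = MIq q p := by
  have hcol : (fun b => ∑ a, p (a + τ b) b) = fun b => ∑ a, p a b :=
    funext fun b => Equiv.sum_comp (Equiv.addRight (τ b)) (p · b)
  rw [MIq, MIq, funext h, hcol]
  congr 1
  exact Hq_comp_equiv q (fun ab : α × β => p ab.1 ab.2)
    ⟨fun x => (x.1 + τ x.2, x.2), fun x => (x.1 - τ x.2, x.2), fun x => by simp,
      fun x => by simp⟩

theorem MIq_mul_right (q : ℕ) (f : α → β → ℝ) (g : γ → ℝ) (hg : ∑ c, g c = 1) :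
    MIq q (fun a (bc : β × γ) => f a bc.1 * g bc.2) = MIq q f := by
  have hrow : (fun a => ∑ bc : β × γ, f a bc.1 * g bc.2) = fun a => ∑ b, f a b := by
    simp only [Fintype.sum_prod_type, ← Finset.mul_sum, hg, mul_one]
  have hcol : (fun bc : β × γ => ∑ a, f a bc.1 * g bc.2)
      = fun bc : β × γ => (∑ a, f a bc.1) * g bc.2 := by
    simp only [Finset.sum_mul]
  have hjoint : Hq q (fun x : α × β × γ => f x.1 x.2.1 * g x.2.2)
      = Hq q (fun x : (α × β) × γ => f x.1.1 x.1.2 * g x.2) :=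
    Hq_comp_equiv q (fun x : (α × β) × γ => f x.1.1 x.1.2 * g x.2)
      (Equiv.prodAssoc α β γ).symm
  rw [MIq, MIq, hrow, hcol, hjoint, Hq_mul q (fun b => ∑ a, f a b) g,
    Hq_mul q (fun ab : α × β => f ab.1 ab.2) g, hg]
  simp only [Fintype.sum_prod_type, one_mul]
  rw [Finset.sum_comm]
  ring

theorem mul_log_add_negMulLog_le {p r : ℝ} (hp : 0 ≤ p) (hr : 0 ≤ r) (hpr : 0 < p → 0 < r) :
    p * log r + negMulLog p ≤ r - p := by
  rcases hp.eq_or_lt with rfl | hp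
  · simpa using hr
  have hlog := log_le_sub_one_of_pos (div_pos (hpr hp) hp)
  rw [log_div (hpr hp).ne' hp.ne'] at hlog
  calc p * log r + negMulLog p = p * (log r - log p) := by rw [negMulLog]; ring
    _ ≤ p * (r / p - 1) := by gcongr
    _ = r - p := by field_simp

theorem sum_sum_sum_marginal_mul_marginal_div (p : α → β → γ → ℝ) :
    ∑ a, ∑ b, ∑ c, (∑ c', p a b c') * (∑ a', p a' b c) / (∑ a', ∑ c', p a' b c')
      = ∑ a, ∑ b, ∑ c, p a b c := by
  rw [Finset.sum_comm, eq_comm, Finset.sum_comm]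
  refine Finset.sum_congr rfl fun b _ => ?_
  have hbc : ∑ c, ∑ a', p a' b c = ∑ a', ∑ c, p a' b c := Finset.sum_comm
  simp only [← Finset.mul_sum, ← Finset.sum_div, hbc, ← Finset.sum_mul]
  exact (mul_self_div_self _).symm

theorem sum_negMulLog_strong_subadditivity (p : α → β → γ → ℝ)
    (hp : ∀ a b c, 0 ≤ p a b c) :
    ∑ a, ∑ b, ∑ c, negMulLog (p a b c) + ∑ b, negMulLog (∑ a, ∑ c, p a b c)
      ≤ ∑ a, ∑ b, negMulLog (∑ c, p a b c) + ∑ b, ∑ c, negMulLog (∑ a, p a b c) := by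
  set pab := fun a b => ∑ c, p a b c
  set pbc := fun b c => ∑ a, p a b c
  set pb := fun b => ∑ a, ∑ c, p a b c
  have pos_of_pos : ∀ a b c, 0 < p a b c → 0 < pab a b ∧ 0 < pbc b c ∧ 0 < pb b := by
    intro a b c h
    have hab : 0 < pab a b :=
      h.trans_le <| Finset.single_le_sum (fun c _ => hp a b c) (mem_univ c)
    refine ⟨hab, h.trans_le <| Finset.single_le_sum (fun a _ => hp a b c) (mem_univ a),
      hab.trans_le <| Finset.single_le_sum (f := fun a => pab a b)
        (fun a _ => Finset.sum_nonneg fun c _ => hp a b c) (mem_univ a)⟩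
  -- Gibbs' inequality against `r = p(a,b) p(b,c) / p(b)`, which has the same total mass as `p`
  set r := fun a b c => pab a b * pbc b c / pb b
  have hlog : ∀ a b c, p a b c * log (r a b c)
      = p a b c * log (pab a b) + p a b c * log (pbc b c) - p a b c * log (pb b) := by
    intro a b c
    rcases (hp a b c).eq_or_lt with h | h
    · simp [← h]
    obtain ⟨hab, hbc, hb⟩ := pos_of_pos a b c h
    rw [log_div (mul_pos hab hbc).ne' hb.ne', log_mul hab.ne' hbc.ne']
    ring
  have hr : ∑ a, ∑ b, ∑ c, r a b c = ∑ a, ∑ b, ∑ c, p a b c :=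
    sum_sum_sum_marginal_mul_marginal_div p
  have hr0 : ∀ a b c, 0 ≤ r a b c := fun a b c =>
    div_nonneg (mul_nonneg (Finset.sum_nonneg fun c _ => hp a b c)
      (Finset.sum_nonneg fun a _ => hp a b c))
      (Finset.sum_nonneg fun a _ => Finset.sum_nonneg fun c _ => hp a b c)
  have hgibbs : ∑ a, ∑ b, ∑ c, (p a b c * log (r a b c) + negMulLog (p a b c))
      ≤ ∑ a, ∑ b, ∑ c, (r a b c - p a b c) := by
    gcongr with a _ b _ c _
    exact mul_log_add_negMulLog_le (hp a b c) (hr0 a b c) fun h => by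
      obtain ⟨hab, hbc, hb⟩ := pos_of_pos a b c h
      positivity
  simp only [Finset.sum_add_distrib, Finset.sum_sub_distrib, hlog, hr, sub_self] at hgibbs
  have hab : ∑ a, ∑ b, ∑ c, p a b c * log (pab a b) = -∑ a, ∑ b, negMulLog (pab a b) := by
    simp [negMulLog, ← Finset.sum_mul, pab]
  have hbc : ∑ a, ∑ b, ∑ c, p a b c * log (pbc b c) = -∑ b, ∑ c, negMulLog (pbc b c) := by
    rw [Finset.sum_comm]
    simp only [negMulLog, neg_mul, neg_neg, Finset.sum_neg_distrib]
    refine Finset.sum_congr rfl fun b _ => ?_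
    rw [Finset.sum_comm]
    simp [← Finset.sum_mul, pbc]
  have hb : ∑ a, ∑ b, ∑ c, p a b c * log (pb b) = -∑ b, negMulLog (pb b) := by
    rw [Finset.sum_comm]
    simp [negMulLog, ← Finset.sum_mul, pb]
  rw [hab, hbc, hb] at hgibbs
  linarith

theorem MIq_marginal_le (q : ℕ) (p : α → β × γ → ℝ) (hp : ∀ a bc, 0 ≤ p a bc) :
    MIq q (fun a b => ∑ c, p a (b, c)) ≤ MIq q p := by
  have := sum_negMulLog_strong_subadditivity (fun a b c => p a (b, c)) fun a b c => hp a (b, c)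
  simp only [MIq, Hq_eq_sum_negMulLog, Fintype.sum_prod_type, ← add_div, ← sub_div]
  exact div_le_div_of_nonneg_right (by linarith) (log_natCast_nonneg q)

theorem MIq_le_of_eq_sum (q : ℕ) {f : α → β → ℝ} {p : α → δ → ℝ} (e : β × γ ≃ δ)
    (hp : ∀ a d, 0 ≤ p a d) (hf : ∀ a b, f a b = ∑ c, p a (e (b, c))) :
    MIq q f ≤ MIq q p := by
  obtain rfl : f = fun a b => ∑ c, p a (e (b, c)) := funext fun a => funext (hf a)
  rw [← MIq_comp_equiv_right q p e]
  exact MIq_marginal_le q (fun a bc => p a (e bc)) fun a bc => hp a (e bc)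

end Entropy

section Channel

def IsStochastic {X Z : Type*} [Fintype Z] (C : X → Z → ℝ) : Prop :=
  (∀ x y, 0 ≤ C x y) ∧ ∀ x, ∑ y, C x y = 1

theorem IsStochastic.sum_prod_mul {X Z : Type*} [Fintype Z] {C : X → Z → ℝ}
    (hC : IsStochastic C) (x x' : X) : ∑ y : Z × Z, C x y.1 * C x' y.2 = 1 := by
  rw [Fintype.sum_prod_type, ← Fintype.sum_mul_sum, hC.2, hC.2, one_mul]

noncomputable def symCapacity (q : ℕ) {G Z : Type*} [Fintype G] [Fintype Z] (C : G → Z → ℝ) :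
    ℝ :=
  MIq q (fun x y => C x y / Fintype.card G)

variable {G Z : Type*} [AddCommGroup G] [Fintype G] [Fintype Z]

noncomputable def minusChannel (C : G → Z → ℝ) : G → Z × Z → ℝ :=
  fun u₁ y => (Fintype.card G : ℝ)⁻¹ * ∑ u₂, C (u₁ + u₂) y.1 * C u₂ y.2

noncomputable def plusChannel (C : G → Z → ℝ) : G → (Z × Z) × G → ℝ :=
  fun u₂ z => (Fintype.card G : ℝ)⁻¹ * (C (z.2 + u₂) z.1.1 * C u₂ z.1.2)

theorem symCapacity_minusChannel_le (q : ℕ) {C : G → Z → ℝ} (hC : IsStochastic C) :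
    symCapacity q (minusChannel C) ≤ symCapacity q C := by
  have hN : (Fintype.card G : ℝ) ≠ 0 := Nat.cast_ne_zero.2 Fintype.card_ne_zero
  -- the joint law of `(U₁ + U₂, ((Y₁, Y₂), U₂))`
  set p : G → (Z × Z) × G → ℝ := fun x b => C x b.1.1 * C b.2 b.1.2 / Fintype.card G ^ 2
  have hmass : ∀ g : G → G,
      ∑ b : (Z × Z) × G, C (g b.2) b.1.1 * C b.2 b.1.2 / Fintype.card G ^ 2
        = (Fintype.card G : ℝ)⁻¹ := by
    intro g
    rw [Fintype.sum_prod_type, Finset.sum_comm]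
    simp only [← Finset.sum_div, hC.sum_prod_mul, Finset.sum_const, Finset.card_univ,
      nsmul_eq_mul]
    field_simp
  calc symCapacity q (minusChannel C) ≤ MIq q (fun a b => p (a + b.2) b) := by
        refine MIq_le_of_eq_sum q (Equiv.refl _) (fun a b => ?_) fun a y => ?_
        · exact div_nonneg (mul_nonneg (hC.1 _ _) (hC.1 _ _)) (sq_nonneg _)
        · simp only [minusChannel, p, Equiv.refl_apply, Finset.mul_sum, Finset.sum_div]
          refine Finset.sum_congr rfl fun u _ => ?_
          ring
    _ = MIq q p :=
        MIq_shift q p Prod.snd fun a => (hmass (a + ·)).trans (hmass fun _ => a).symm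
    _ = MIq q (fun a (b : Z × Z × G) =>
          C a b.1 / Fintype.card G * (C b.2.2 b.2.1 / Fintype.card G)) := by
        rw [← MIq_comp_equiv_right q p (Equiv.prodAssoc Z Z G).symm]
        congr 1
        funext a b
        simp only [p, Equiv.prodAssoc_symm_apply]
        ring
    _ = symCapacity q C := by
        refine MIq_mul_right q (fun a y => C a y / Fintype.card G)
          (fun c : Z × G => C c.2 c.1 / Fintype.card G) ?_
        rw [Fintype.sum_prod_type, Finset.sum_comm]
        simp only [← Finset.sum_div, hC.2, Finset.sum_const, Finset.card_univ, nsmul_eq_mul,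
          mul_one]
        exact div_self hN

theorem symCapacity_le_plusChannel (q : ℕ) {C : G → Z → ℝ} (hC : IsStochastic C) :
    symCapacity q C ≤ symCapacity q (plusChannel C) := by
  have hN : (Fintype.card G : ℝ) ≠ 0 := Nat.cast_ne_zero.2 Fintype.card_ne_zero
  let e : Z × Z × G ≃ (Z × Z) × G :=
    ⟨fun x => ((x.2.1, x.1), x.2.2), fun z => (z.1.2, (z.1.1, z.2)), fun _ => rfl, fun _ => rfl⟩
  refine MIq_le_of_eq_sum q e (fun a z => div_nonneg ?_ (Nat.cast_nonneg _)) fun a y => ?_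
  · exact mul_nonneg (inv_nonneg.2 (Nat.cast_nonneg _)) (mul_nonneg (hC.1 _ _) (hC.1 _ _))
  · simp only [plusChannel, e, Equiv.coe_fn_mk, Fintype.sum_prod_type]
    rw [Finset.sum_comm]
    simp only [← Finset.sum_div, ← Finset.mul_sum, ← Finset.sum_mul, hC.2, one_mul,
      Finset.sum_const, Finset.card_univ, nsmul_eq_mul]
    field_simp

end Channel

def MAC.pairChannel {q : ℕ} (M : MAC q) : ZMod q × ZMod q → M.Y → ℝ :=
  fun xw y => M.P xw.1 xw.2 y

theorem IsMAC.isStochastic_pairChannel {M : MAC q} (hM : IsMAC M) :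
    IsStochastic M.pairChannel :=
  ⟨fun xw y => hM.1 xw.1 xw.2 y, fun xw => hM.2 xw.1 xw.2⟩

theorem card_zmod_prod : (Fintype.card (ZMod q × ZMod q) : ℝ) = (q : ℝ) ^ 2 := by
  rw [Fintype.card_prod, ZMod.card, Nat.cast_mul, sq]

theorem I12_eq_symCapacity (M : MAC q) : I12 q M = symCapacity q M.pairChannel := by
  simp only [I12, symCapacity, MAC.pairChannel, card_zmod_prod]

theorem I12_minusT (M : MAC q) :
    I12 q (minusT q M) = symCapacity q (minusChannel M.pairChannel) := by
  simp only [I12, symCapacity, minusT, minusChannel, MAC.pairChannel, card_zmod_prod,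
    Fintype.sum_prod_type, Prod.fst_add, Prod.snd_add]
  rfl

theorem I12_plusT (M : MAC q) :
    I12 q (plusT q M) = symCapacity q (plusChannel M.pairChannel) := by
  simp only [I12, symCapacity, plusT, plusChannel, MAC.pairChannel, card_zmod_prod,
    Prod.fst_add, Prod.snd_add]
  rfl

noncomputable def MAC.firstUserChannel {q : ℕ} (M : MAC q) : ZMod q → ZMod q × M.Y → ℝ :=
  fun x wy => M.P x wy.1 wy.2 / q

theorem IsMAC.isStochastic_firstUserChannel {M : MAC q} (hM : IsMAC M) :
    IsStochastic M.firstUserChannel := by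
  refine ⟨fun x wy => div_nonneg (hM.1 _ _ _) (Nat.cast_nonneg q), fun x => ?_⟩
  have hq : (q : ℝ) ≠ 0 := Nat.cast_ne_zero.2 (NeZero.ne q)
  simp only [MAC.firstUserChannel, Fintype.sum_prod_type, ← Finset.sum_div, hM.2,
    Finset.sum_const, Finset.card_univ, ZMod.card, nsmul_eq_mul, mul_one]
  exact div_self hq

theorem I1_eq_symCapacity (M : MAC q) : I1 q M = symCapacity q M.firstUserChannel := by
  simp only [I1, symCapacity, MAC.firstUserChannel, ZMod.card, div_div, sq]

theorem I1_minusT_le_symCapacity {M : MAC q} (hM : IsMAC M) :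
    I1 q (minusT q M) ≤ symCapacity q (minusChannel M.firstUserChannel) := by
  have hC := hM.isStochastic_firstUserChannel
  let e : (ZMod q × M.Y × M.Y) × ZMod q ≃ (ZMod q × M.Y) × (ZMod q × M.Y) :=
    ⟨fun b => ((b.1.1 + b.2, b.1.2.1), (b.2, b.1.2.2)),
      fun z => ((z.1.1 - z.2.1, z.1.2, z.2.2), z.2.1), fun _ => by simp, fun _ => by simp⟩
  change MIq q (fun u₁ (b : ZMod q × M.Y × M.Y) => (minusT q M).P u₁ b.1 b.2 / (q : ℝ) ^ 2)
    ≤ _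
  refine MIq_le_of_eq_sum q e (fun u z => ?_) fun u₁ vy => ?_
  · exact div_nonneg (mul_nonneg (inv_nonneg.2 (Nat.cast_nonneg _))
      (Finset.sum_nonneg fun _ _ => mul_nonneg (hC.1 _ _) (hC.1 _ _))) (Nat.cast_nonneg _)
  · simp only [e, Equiv.coe_fn_mk, minusT, minusChannel, MAC.firstUserChannel, ZMod.card,
      Finset.mul_sum, Finset.sum_div]
    rw [Finset.sum_comm]
    refine Finset.sum_congr rfl fun v₂ _ => Finset.sum_congr rfl fun u₂ _ => ?_
    ring

theorem I1_plusT (M : MAC q) :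
    I1 q (plusT q M) = symCapacity q (plusChannel M.firstUserChannel) := by
  let e :
      ZMod q × (M.Y × M.Y) × ZMod q × ZMod q ≃ ((ZMod q × M.Y) × (ZMod q × M.Y)) × ZMod q :=
    ⟨fun b => (((b.2.2.2 + b.1, b.2.1.1), (b.1, b.2.1.2)), b.2.2.1),
      fun z => (z.1.2.1, (z.1.1.2, z.1.2.2), z.2, z.1.1.1 - z.1.2.1),
      fun _ => by simp, fun _ => by simp⟩
  change MIq q (fun u₂ (b : ZMod q × (M.Y × M.Y) × ZMod q × ZMod q) =>
    (plusT q M).P u₂ b.1 b.2 / (q : ℝ) ^ 2) = _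
  rw [symCapacity, ← MIq_comp_equiv_right q
    (fun x y => plusChannel M.firstUserChannel x y / Fintype.card (ZMod q)) e]
  congr 1
  funext u₂ b
  simp only [e, Equiv.coe_fn_mk, plusT, plusChannel, MAC.firstUserChannel, ZMod.card]
  ring

theorem I1_minusT_le {M : MAC q} (hM : IsMAC M) : I1 q (minusT q M) ≤ I1 q M := by
  rw [I1_eq_symCapacity q M]
  exact (I1_minusT_le_symCapacity q hM).trans
    (symCapacity_minusChannel_le q hM.isStochastic_firstUserChannel)

theorem I1_le_plusT {M : MAC q} (hM : IsMAC M) : I1 q M ≤ I1 q (plusT q M) := by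
  rw [I1_eq_symCapacity, I1_plusT]
  exact symCapacity_le_plusChannel q hM.isStochastic_firstUserChannel

def MAC.swap {q : ℕ} (M : MAC q) : MAC q where
  Y := M.Y
  P := fun x w y => M.P w x y

theorem IsMAC.swap {M : MAC q} (hM : IsMAC M) : IsMAC M.swap :=
  ⟨fun x w y => hM.1 w x y, fun x w => hM.2 w x⟩

theorem I2_eq_I1_swap (M : MAC q) : I2 q M = I1 q M.swap := rfl

theorem I2_minusT (M : MAC q) : I2 q (minusT q M) = I1 q (minusT q M.swap) := by
  simp only [I2, I1, minusT, MAC.swap]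
  congr 1
  funext v₁ b
  rw [Finset.sum_comm]

theorem I2_plusT (M : MAC q) : I2 q (plusT q M) = I1 q (plusT q M.swap) := by
  change _ = MIq q (fun x (b : ZMod q × (M.Y × M.Y) × ZMod q × ZMod q) =>
    (plusT q M.swap).P x b.1 b.2 / (q : ℝ) ^ 2)
  rw [← MIq_comp_equiv_right q _ ((Equiv.refl (ZMod q)).prodCongr
    ((Equiv.refl (M.Y × M.Y)).prodCongr (Equiv.prodComm (ZMod q) (ZMod q))))]
  rfl

theorem I2_minusT_le {M : MAC q} (hM : IsMAC M) : I2 q (minusT q M) ≤ I2 q M := by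
  rw [I2_minusT, I2_eq_I1_swap]
  exact I1_minusT_le q hM.swap

theorem I2_le_plusT {M : MAC q} (hM : IsMAC M) : I2 q M ≤ I2 q (plusT q M) := by
  rw [I2_plusT, I2_eq_I1_swap]
  exact I1_le_plusT q hM.swap

theorem I12_minusT_le {M : MAC q} (hM : IsMAC M) : I12 q (minusT q M) ≤ I12 q M := by
  rw [I12_minusT, I12_eq_symCapacity]
  exact symCapacity_minusChannel_le q hM.isStochastic_pairChannel

theorem I12_le_plusT {M : MAC q} (hM : IsMAC M) : I12 q M ≤ I12 q (plusT q M) := by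
  rw [I12_plusT, I12_eq_symCapacity]
  exact symCapacity_le_plusChannel q hM.isStochastic_pairChannel

theorem rateRegion_mono {M M' : MAC q} (h₁ : I1 q M ≤ I1 q M') (h₂ : I2 q M ≤ I2 q M')
    (h₁₂ : I12 q M ≤ I12 q M') : rateRegion q M ⊆ rateRegion q M' :=
  fun _ ⟨hr₁, hr₁', hr₂, hr₂', hr₁₂⟩ => ⟨hr₁, hr₁'.trans h₁, hr₂, hr₂'.trans h₂, hr₁₂.trans h₁₂⟩

/-- `P⁻` is worse and `P⁺` is better than `P`:
`I⁽ᵅ⁾(P⁻) ≤ I⁽ᵅ⁾(P) ≤ I⁽ᵅ⁾(P⁺)` for `α ∈ {1, 2, 12}`, and consequently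
`𝕀(P⁻) ⊆ 𝕀(P) ⊆ 𝕀(P⁺)`. -/
theorem transform_monotone (q : ℕ) [Fact (Nat.Prime q)] (M : MAC q) (hM : IsMAC M) :
    (I1 q (minusT q M) ≤ I1 q M ∧ I1 q M ≤ I1 q (plusT q M)) ∧
    (I2 q (minusT q M) ≤ I2 q M ∧ I2 q M ≤ I2 q (plusT q M)) ∧
    (I12 q (minusT q M) ≤ I12 q M ∧ I12 q M ≤ I12 q (plusT q M)) ∧
    rateRegion q (minusT q M) ⊆ rateRegion q M ∧
    rateRegion q M ⊆ rateRegion q (plusT q M) := by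
  have minus₁ := I1_minusT_le q hM
  have minus₂ := I2_minusT_le q hM
  have minus₁₂ := I12_minusT_le q hM
  have plus₁ := I1_le_plusT q hM
  have plus₂ := I2_le_plusT q hM
  have plus₁₂ := I12_le_plusT q hM
  exact ⟨⟨minus₁, plus₁⟩, ⟨minus₂, plus₂⟩, ⟨minus₁₂, plus₁₂⟩,
    rateRegion_mono q minus₁ minus₂ minus₁₂, rateRegion_mono q plus₁ plus₂ plus₁₂⟩

end PolarMAC
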